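/- arXiv:1604.07797 — 6 statements merged into one kernel-verified Lean document; each statement's English description precedes it below -/
import Mathlib

section
/- Let A be a Γ-graded *-ring and γ_1,…,γ_n, δ_1,…,δ_n ∈ Γ such that for each i there exists a_i ∈ A_{δ_i} with a_i a_i* = a_i* a_i = 1. Then the graded matrix rings M_n(A)(γ_1,…,γ_n) and M_n(A)(γ_1+δ_1,…,γ_n+δ_n) are graded *-isomorphic, via conjugation by the diagonal matrix with entries a_1,…,a_n. -/
/-- The degree-`δ` component of the graded matrix ring `Mₙ(A)(γ₁,…,γₙ)`: matrices `(a_{ij})`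
with `a_{ij} ∈ 𝒜 (δ + γ_j - γ_i)`. -/
def matGrading {Γ : Type*} [AddCommGroup Γ] {A : Type*} [Ring A]
    (𝒜 : Γ → AddSubgroup A) {n : ℕ} (γs : Fin n → Γ) (δ : Γ) :
    AddSubgroup (Matrix (Fin n) (Fin n) A) where
  carrier := {M | ∀ i j, M i j ∈ 𝒜 (δ + γs j - γs i)}
  add_mem' := by
    intro M N hM hN i j
    rw [Matrix.add_apply]
    exact add_mem (hM i j) (hN i j)
  zero_mem' := by
    intro i j
    rw [Matrix.zero_apply]
    exact zero_mem _
  neg_mem' := by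
    intro M hM i j
    rw [Matrix.neg_apply]
    exact neg_mem (hM i j)

/-- For a `Γ`-graded `*`-ring `A` and `γ₁,…,γₙ, δ₁,…,δₙ ∈ Γ` such that each
`δᵢ`-component contains a unitary element `aᵢ`, the graded matrix rings `Mₙ(A)(γ₁,…,γₙ)` and
`Mₙ(A)(γ₁+δ₁,…,γₙ+δₙ)` are graded `*`-isomorphic, via conjugation by the diagonal matrix with
entries `a₁,…,aₙ`. -/
theorem stmt_4 {Γ : Type*} [AddCommGroup Γ] [DecidableEq Γ]
    {A : Type*} [Ring A] [StarRing A]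
    (𝒜 : Γ → AddSubgroup A) [GradedRing 𝒜]
    (hstar : ∀ (γ : Γ) (a : A), a ∈ 𝒜 γ → star a ∈ 𝒜 (-γ))
    {n : ℕ} (γs δs : Fin n → Γ) (a : Fin n → A)
    (ha : ∀ i, a i ∈ 𝒜 (δs i) ∧ a i * star (a i) = 1 ∧ star (a i) * a i = 1) :
    ∃ e : Matrix (Fin n) (Fin n) A ≃+* Matrix (Fin n) (Fin n) A,
      (∀ x, e (star x) = star (e x)) ∧
      (∀ (d : Γ) (x : Matrix (Fin n) (Fin n) A),
        x ∈ matGrading 𝒜 γs d ↔ e x ∈ matGrading 𝒜 (fun i => γs i + δs i) d) ∧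
      (∀ x, e x = Matrix.diagonal (fun i => star (a i)) * x * Matrix.diagonal a) := by
  set D : Matrix (Fin n) (Fin n) A := Matrix.diagonal a with hD
  set Ds : Matrix (Fin n) (Fin n) A := Matrix.diagonal (fun i => star (a i)) with hDs
  have hDsD : Ds * D = 1 := by
    rw [hD, hDs, Matrix.diagonal_mul_diagonal]
    convert Matrix.diagonal_one
    exact (ha _).2.2
  have hDDs : D * Ds = 1 := by
    rw [hD, hDs, Matrix.diagonal_mul_diagonal]
    convert Matrix.diagonal_one
    exact (ha _).2.1
  have key : ∀ (γ1 γ2 : Fin n → Γ) (b c : Fin n → A),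
      (∀ i, b i ∈ 𝒜 (γ1 i - γ2 i)) → (∀ j, c j ∈ 𝒜 (γ2 j - γ1 j)) →
      ∀ (d : Γ) (y : Matrix (Fin n) (Fin n) A), y ∈ matGrading 𝒜 γ1 d →
      Matrix.diagonal b * y * Matrix.diagonal c ∈ matGrading 𝒜 γ2 d := by
    intro γ1 γ2 b c hb hc d y hy i j
    rw [Matrix.mul_diagonal, Matrix.diagonal_mul]
    have h := SetLike.mul_mem_graded (SetLike.mul_mem_graded (hb i) (hy i j)) (hc j)
    have he : γ1 i - γ2 i + (d + γ1 j - γ1 i) + (γ2 j - γ1 j) = d + γ2 j - γ2 i := by abel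
    rw [← he]
    exact h
  refine ⟨{
    toFun := fun x => Ds * x * D
    invFun := fun x => D * x * Ds
    left_inv := by
      intro x
      calc D * (Ds * x * D) * Ds = (D * Ds) * x * (D * Ds) := by noncomm_ring
        _ = x := by rw [hDDs, one_mul, mul_one]
    right_inv := by
      intro x
      calc Ds * (D * x * Ds) * D = (Ds * D) * x * (Ds * D) := by noncomm_ring
        _ = x := by rw [hDsD, one_mul, mul_one]
    map_mul' := by
      intro x y
      show Ds * (x * y) * D = Ds * x * D * (Ds * y * D)
      calc Ds * (x * y) * D = Ds * x * (D * Ds) * (y * D) := by rw [hDDs]; noncomm_ring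
        _ = Ds * x * D * (Ds * y * D) := by noncomm_ring
    map_add' := by intro x y; noncomm_ring }, ?_, ?_, ?_⟩
  · intro x
    show Ds * star x * D = star (Ds * x * D)
    rw [star_mul, star_mul, Matrix.star_eq_conjTranspose D, Matrix.star_eq_conjTranspose Ds,
      hD, hDs, Matrix.diagonal_conjTranspose, Matrix.diagonal_conjTranspose]
    have h1 : star (fun i => star (a i)) = a := by funext i; exact star_star (a i)
    have h2 : (star a : Fin n → A) = fun i => star (a i) := rfl
    rw [h1, h2, mul_assoc]
  · intro d x
    constructor
    · intro hx
      exact key γs (fun i => γs i + δs i) (fun i => star (a i)) a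
        (fun i => by simpa using hstar _ _ (ha i).1)
        (fun j => by simpa using (ha j).1) d x hx
    · intro hx
      have h := key (fun i => γs i + δs i) γs a (fun i => star (a i))
        (fun i => by simpa using (ha i).1)
        (fun j => by simpa using hstar _ _ (ha j).1) d _ hx
      have : D * (Ds * x * D) * Ds = x := by
        calc D * (Ds * x * D) * Ds = (D * Ds) * x * (D * Ds) := by noncomm_ring
          _ = x := by rw [hDDs, one_mul, mul_one]
      rw [← hD, ← hDs] at h
      exact this ▸ h
  · intro x; rfl
end

section
/- Let A be a Γ-graded ring, γ̄ ∈ Γ^n, and e_{ii}, e_{jj} standard diagonal matrix units in M_n(A)(γ̄). Then e_{ii} M_n(A)(γ̄) ≅_gr e_{jj} M_n(A)(γ̄) as graded right modules if and only if γ_i − γ_j ∈ Γ_A, where Γ_A = { γ ∈ Γ | A_γ ≠ 0 } is the support of A (assumed here that A is a graded division ring so Γ_A is a subgroup). -/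
/-
Over a graded division ring, a nonzero `a ∈ A_{γ_i - γ_j}` has an inverse of degree `γ_j - γ_i`,
so `e_{ji}(a)` and `e_{ij}(a⁻¹)` are degree-`0` matrices whose products are `e_{jj}` and `e_{ii}`;
left multiplication by `e_{ji}(a)` is then the graded isomorphism. Conversely, a graded
isomorphism sends `e_{ii}` to a degree-`0` element of `e_{jj} Mₙ(A) e_{ii}`, i.e. to `e_{ji}(c)` with
`c ∈ A_{γ_i - γ_j}`; if that component vanishes, `e_{ii}` is sent to `0`, contradicting injectivity.
-/

open Matrix

theorem SetLike.mem_graded_neg_of_mul_eq_one {Γ A : Type*} [AddCommGroup Γ] [DecidableEq Γ]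
    [Ring A] (𝒜 : Γ → AddSubgroup A) [GradedRing 𝒜] {a b : A} {γ : Γ} (ha : a ∈ 𝒜 γ)
    (hab : a * b = 1) (hba : b * a = 1) : b ∈ 𝒜 (-γ) := by
  set b' : A := (DirectSum.decompose 𝒜 b (-γ) : A)
  have hab' : a * b' = 1 := by
    rw [← DirectSum.coe_decompose_mul_add_of_left_mem 𝒜 ha, hab, add_neg_cancel,
      DirectSum.decompose_of_mem_same 𝒜 (SetLike.one_mem_graded 𝒜)]
  have hb : b = b' := by
    rw [← one_mul b', ← hba, mul_assoc, hab', mul_one]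
  exact hb ▸ SetLike.coe_mem _

theorem Set.bijOn_mul_left_of_mul_eq {R : Type*} [Semigroup R] {e e' p q : R}
    (hqp : q * p = e) (hpq : p * q = e') :
    Set.BijOn (p * ·) {x | e * x = x} {x | e' * x = x} := by
  refine ⟨fun x hx => ?_, fun x hx y hy hxy => ?_, fun y hy => ⟨q * y, ?_, ?_⟩⟩
  · change e' * (p * x) = p * x
    rw [← hpq, mul_assoc, ← mul_assoc q, hqp, hx]
  · change e * x = x at hx
    change e * y = y at hy
    rw [← hx, ← hy, ← hqp, mul_assoc, mul_assoc]
    exact congrArg (q * ·) hxy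
  · change e * (q * y) = q * y
    rw [← hqp, mul_assoc, ← mul_assoc p, hpq, hy]
  · change p * (q * y) = y
    rw [← mul_assoc, hpq, hy]

section matGrading

variable {Γ A : Type*} [AddCommGroup Γ] [Ring A] (𝒜 : Γ → AddSubgroup A) {n : ℕ}
  (γs : Fin n → Γ)

theorem single_mem_matGrading_iff {d : Γ} {k l : Fin n} {a : A} :
    single k l a ∈ matGrading 𝒜 γs d ↔ a ∈ 𝒜 (d + γs l - γs k) := by
  refine ⟨fun h => by simpa using h k l, fun h k' l' => ?_⟩
  by_cases hkl : k = k' ∧ l = l'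
  · obtain ⟨rfl, rfl⟩ := hkl
    simpa using h
  · rw [single_apply_of_ne (h := hkl)]
    exact zero_mem _

theorem eq_zero_of_mem_matGrading_zero {i j : Fin n} (hbot : 𝒜 (γs i - γs j) = ⊥)
    {M : Matrix (Fin n) (Fin n) A} (hM : M ∈ matGrading 𝒜 γs 0)
    (hrow : single j j 1 * M = M) (hcol : M * single i i 1 = M) : M = 0 := by
  have hsingle : M = single j i (M j i) := by
    conv_lhs => rw [← hcol, ← hrow]
    rw [single_mul_mul_single, one_mul, mul_one]
  have hji : M j i ∈ 𝒜 (0 + γs i - γs j) := hM j i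
  rw [zero_add, hbot, AddSubgroup.mem_bot] at hji
  rw [hsingle, hji, single_zero]

variable [DecidableEq Γ] [GradedRing 𝒜]

theorem mul_mem_matGrading {d d' : Γ} {P M : Matrix (Fin n) (Fin n) A}
    (hP : P ∈ matGrading 𝒜 γs d) (hM : M ∈ matGrading 𝒜 γs d') :
    P * M ∈ matGrading 𝒜 γs (d + d') := by
  intro k l
  rw [mul_apply]
  refine AddSubgroup.sum_mem _ fun m _ => ?_
  convert SetLike.mul_mem_graded (hP k m) (hM m l) using 2
  abel

theorem mul_mem_matGrading_iff_of_mem_zero {d : Γ} {P Q M : Matrix (Fin n) (Fin n) A}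
    (hP : P ∈ matGrading 𝒜 γs 0) (hQ : Q ∈ matGrading 𝒜 γs 0) (hQPM : Q * (P * M) = M) :
    P * M ∈ matGrading 𝒜 γs d ↔ M ∈ matGrading 𝒜 γs d := by
  refine ⟨fun hPM => ?_, fun hM => zero_add d ▸ mul_mem_matGrading 𝒜 γs hP hM⟩
  rw [← hQPM, ← zero_add d]
  exact mul_mem_matGrading 𝒜 γs hQ hPM

end matGrading

/-- Let `A` be a `Γ`-graded division ring (every nonzero homogeneous element
is invertible), `γ̄ ∈ Γⁿ`, and `e_{ii}, e_{jj}` standard diagonal matrix units of `Mₙ(A)(γ̄)`.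
Then `e_{ii} Mₙ(A)(γ̄) ≅_gr e_{jj} Mₙ(A)(γ̄)` as graded right `Mₙ(A)(γ̄)`-modules (an additive,
right-module-linear, degree-preserving bijection exists) if and only if `γ_i - γ_j ∈ Γ_A`,
i.e. `𝒜 (γ_i - γ_j) ≠ ⊥`. -/
theorem stmt_6 {Γ : Type*} [AddCommGroup Γ] [DecidableEq Γ]
    {A : Type*} [Ring A] [Nontrivial A]
    (𝒜 : Γ → AddSubgroup A) [GradedRing 𝒜]
    (hdiv : ∀ a : A, a ≠ 0 → (∃ γ, a ∈ 𝒜 γ) → IsUnit a)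
    {n : ℕ} (γs : Fin n → Γ) (i j : Fin n) :
    (∃ f : Matrix (Fin n) (Fin n) A → Matrix (Fin n) (Fin n) A,
      Set.BijOn f {M | Matrix.single i i 1 * M = M}
        {M | Matrix.single j j 1 * M = M} ∧
      (∀ M N : Matrix (Fin n) (Fin n) A, Matrix.single i i 1 * M = M →
        Matrix.single i i 1 * N = N → f (M + N) = f M + f N) ∧
      (∀ (M r : Matrix (Fin n) (Fin n) A), Matrix.single i i 1 * M = M →
        f (M * r) = f M * r) ∧
      (∀ (d : Γ) (M : Matrix (Fin n) (Fin n) A), Matrix.single i i 1 * M = M →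
        (M ∈ matGrading 𝒜 γs d ↔ f M ∈ matGrading 𝒜 γs d))) ↔
    𝒜 (γs i - γs j) ≠ ⊥ := by
  constructor
  · rintro ⟨f, hbij, hadd, hlin, hdeg⟩ hbot
    have hE : single i i 1 * single i i (1 : A) = single i i 1 := by simp
    have hE0 : single i i (1 : A) ∈ matGrading 𝒜 γs 0 :=
      (single_mem_matGrading_iff 𝒜 γs).2 (by simpa using SetLike.one_mem_graded 𝒜)
    have hfE : f (single i i 1) = 0 :=
      eq_zero_of_mem_matGrading_zero 𝒜 γs hbot ((hdeg 0 _ hE).1 hE0) (hbij.mapsTo hE)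
        (by rw [← hlin _ _ hE, hE])
    have hf0 : f 0 = 0 := by simpa using hadd 0 0 (by simp) (by simp)
    have hE_eq_zero : single i i (1 : A) = 0 :=
      hbij.injOn hE (by simp) (hfE.trans hf0.symm)
    simpa using congr_fun₂ hE_eq_zero i i
  · intro hne
    obtain ⟨a, ha, ha0⟩ := (AddSubgroup.bot_or_exists_ne_zero _).resolve_left hne
    obtain ⟨b, hab, hba⟩ := isUnit_iff_exists.1 (hdiv a ha0 ⟨_, ha⟩)
    have hb : b ∈ 𝒜 (0 + γs j - γs i) := by
      simpa using SetLike.mem_graded_neg_of_mul_eq_one 𝒜 ha hab hba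
    have hP : single j i a ∈ matGrading 𝒜 γs 0 :=
      (single_mem_matGrading_iff 𝒜 γs).2 (by simpa using ha)
    have hQ : single i j b ∈ matGrading 𝒜 γs 0 := (single_mem_matGrading_iff 𝒜 γs).2 hb
    have hQP : single i j b * single j i a = single i i 1 := by simp [hba]
    refine ⟨(single j i a * ·), Set.bijOn_mul_left_of_mul_eq hQP (by simp [hab]),
      fun M N _ _ => mul_add _ M N, fun M r _ => (mul_assoc _ M r).symm, fun d M hM =>
      (mul_mem_matGrading_iff_of_mem_zero 𝒜 γs hP hQ (by rw [← mul_assoc, hQP, hM])).symm⟩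
end

section
/- A *-ring A is n-proper if and only if the matrix *-ring M_n(A) with the *-transpose involution is proper (i.e., 1-proper). Consequently, A is positive definite if and only if M_n(A) is positive definite for every n. -/
/-!
The `(r, r)` entry of `∑ₖ Xₖ Xₖ*` for `Xₖ ∈ Mₙ(A)` is `∑ₖ ∑ⱼ (Xₖ)ᵣⱼ (Xₖ)ᵣⱼ*`, a sum of `m n` terms
of the form `y y*`; so `m n`-properness of `A` forces every entry of every `Xₖ` to vanish.
Conversely, a vector `x ∈ Aⁿ` with `∑ⱼ xⱼ xⱼ* = 0` becomes the matrix `M` all of whose rows are `x`,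
and then `M M* = 0`, so `1`-properness of `Mₙ(A)` gives `x = 0`.
-/

/-- A `*`-ring is `n`-proper if `Σᵢ xᵢ xᵢ* = 0` implies that all `xᵢ = 0`. -/
def IsNProper (A : Type*) [Ring A] [StarRing A] (n : ℕ) : Prop :=
  ∀ x : Fin n → A, ∑ i, x i * star (x i) = 0 → ∀ i, x i = 0

section

open Matrix

variable {A : Type*} [Ring A] [StarRing A]

theorem IsNProper.eq_zero_of_sum_mul_star_eq_zero {ι : Type*} [Fintype ι]
    (h : IsNProper A (Fintype.card ι)) (x : ι → A) (hx : ∑ i, x i * star (x i) = 0) (i : ι) :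
    x i = 0 := by
  let e := Fintype.equivFin ι
  have hxe : ∑ k, x (e.symm k) * star (x (e.symm k)) = 0 :=
    (e.symm.sum_comp fun i => x i * star (x i)).trans hx
  simpa using h (x ∘ e.symm) hxe (e i)

theorem Matrix.sum_mul_conjTranspose_apply_self {κ m n : Type*} [Fintype κ] [Fintype n]
    (X : κ → Matrix m n A) (r : m) :
    (∑ k, X k * (X k)ᴴ) r r = ∑ p : κ × n, X p.1 r p.2 * star (X p.1 r p.2) := by
  simp [sum_apply, mul_apply, Fintype.sum_prod_type]

theorem isNProper_matrix_of_isNProper_mul {m n : ℕ} (h : IsNProper A (m * n)) :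
    IsNProper (Matrix (Fin n) (Fin n) A) m := by
  rw [← Fintype.card_fin m, ← Fintype.card_fin n, ← Fintype.card_prod] at h
  intro X hX k
  ext r c
  have hdiag := sum_mul_conjTranspose_apply_self X r
  simp only [← star_eq_conjTranspose, hX] at hdiag
  exact h.eq_zero_of_sum_mul_star_eq_zero _ hdiag.symm (k, c)

theorem IsNProper.of_matrix {n : ℕ} (h : IsNProper (Matrix (Fin n) (Fin n) A) 1) :
    IsNProper A n := by
  intro x hx i
  let M : Matrix (Fin n) (Fin n) A := Matrix.of fun _ j => x j
  have hM : M * star M = 0 := by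
    ext r c
    simpa [M, mul_apply] using hx
  have hM0 : M = 0 := h (fun _ => M) (by simpa using hM) 0
  simpa [M] using congrFun (congrFun hM0 i) i

end

/-- A `*`-ring `A` is `n`-proper if and only if the matrix `*`-ring
`Mₙ(A)` (with the `*`-transpose involution) is proper, i.e. `1`-proper.  Consequently `A` is
positive definite if and only if `Mₙ(A)` is positive definite for every `n`. -/
theorem stmt_13 {A : Type*} [Ring A] [StarRing A] :
    (∀ n : ℕ, IsNProper A n ↔ IsNProper (Matrix (Fin n) (Fin n) A) 1) ∧
    ((∀ n : ℕ, IsNProper A n) ↔ ∀ n m : ℕ, IsNProper (Matrix (Fin n) (Fin n) A) m) :=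
  ⟨fun _ => ⟨fun h => isNProper_matrix_of_isNProper_mul (by rwa [one_mul]), IsNProper.of_matrix⟩,
    ⟨fun hA _ _ => isNProper_matrix_of_isNProper_mul (hA _), fun h n => (h n 1).of_matrix⟩⟩
end

section
/- Let A be a Γ-graded ring and p, q homogeneous idempotents in A (necessarily in A_0). Then p and q are graded algebraically equivalent (there exist x ∈ A_γ, y ∈ A_{−γ} with xy = p, yx = q for some γ ∈ Γ) if and only if qA ≅_gr pA(γ) as graded right A-modules for some γ ∈ Γ. In particular, p ∼_{A_0} q (equivalence realized by elements of A_0) if and only if qA ≅_gr pA. -/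
/-- A graded isomorphism `qA ≅_gr pA(γ)` of graded right `A`-modules: an additive,
right-`A`-linear bijection from `qA = {a | q a = a}` onto `pA = {a | p a = a}` sending the
degree-`δ` component of `qA` to the degree-`δ` component of `pA(γ)` (i.e. `pA ∩ A_{γ+δ}`). -/
def grIsoShift {Γ : Type*} [AddCommGroup Γ] {A : Type*} [Ring A]
    (𝒜 : Γ → AddSubgroup A) (p q : A) (γ : Γ) : Prop :=
  ∃ f : A → A,
    Set.BijOn f {a : A | q * a = a} {a : A | p * a = a} ∧
    (∀ a b : A, q * a = a → q * b = b → f (a + b) = f a + f b) ∧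
    (∀ a b : A, q * a = a → f (a * b) = f a * b) ∧
    ∀ (δ : Γ) (a : A), q * a = a → (a ∈ 𝒜 δ ↔ f a ∈ 𝒜 (γ + δ))

private lemma aux_equiv_iff {Γ : Type*} [AddCommGroup Γ] [DecidableEq Γ]
    {A : Type*} [Ring A]
    (𝒜 : Γ → AddSubgroup A) [GradedRing 𝒜]
    (p q : A) (hp : p * p = p) (hq : q * q = q)
    (hp0 : p ∈ 𝒜 0) (hq0 : q ∈ 𝒜 0) (γ : Γ) :
    (∃ x y : A, x ∈ 𝒜 γ ∧ y ∈ 𝒜 (-γ) ∧ x * y = p ∧ y * x = q) ↔ grIsoShift 𝒜 p q γ := by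
  constructor
  · rintro ⟨x, y, hx, hy, hxy, hyx⟩
    -- replace x, y by x' = p x q, y' = q y p
    set x' := p * x * q with hx'def
    set y' := q * y * p with hy'def
    have key1 : x * q * y = p := by
      rw [← hyx, show x * (y * x) * y = (x * y) * (x * y) by noncomm_ring, hxy, hp]
    have key2 : y * p * x = q := by
      rw [← hxy, show y * (x * y) * x = (y * x) * (y * x) by noncomm_ring, hyx, hq]
    have hx'y' : x' * y' = p := by
      calc p * x * q * (q * y * p) = p * (x * (q * q) * y) * p := by noncomm_ring
        _ = p * (x * q * y) * p := by rw [hq]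
        _ = p := by rw [key1, hp, hp]
    have hy'x' : y' * x' = q := by
      calc q * y * p * (p * x * q) = q * (y * (p * p) * x) * q := by noncomm_ring
        _ = q * (y * p * x) * q := by rw [hp]
        _ = q := by rw [key2, hq, hq]
    have hpx' : p * x' = x' := by rw [hx'def, show p * (p * x * q) = (p * p) * x * q by noncomm_ring, hp]
    have hqy' : q * y' = y' := by rw [hy'def, show q * (q * y * p) = (q * q) * y * p by noncomm_ring, hq]
    have hx'mem : x' ∈ 𝒜 γ := by
      have : x' ∈ 𝒜 ((0 + γ) + 0) := SetLike.mul_mem_graded (SetLike.mul_mem_graded hp0 hx) hq0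
      simpa using this
    have hy'mem : y' ∈ 𝒜 (-γ) := by
      have : y' ∈ 𝒜 ((0 + -γ) + 0) := SetLike.mul_mem_graded (SetLike.mul_mem_graded hq0 hy) hp0
      simpa using this
    refine ⟨fun a => x' * a, ⟨?_, ?_, ?_⟩, ?_, ?_, ?_⟩
    · intro a ha
      simp only [Set.mem_setOf_eq] at ha ⊢
      rw [← mul_assoc, hpx']
    · intro a ha b hb hab
      simp only [Set.mem_setOf_eq] at ha hb hab
      calc a = q * a := ha.symm
        _ = y' * x' * a := by rw [hy'x']
        _ = y' * (x' * a) := mul_assoc _ _ _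
        _ = y' * (x' * b) := by rw [hab]
        _ = y' * x' * b := (mul_assoc _ _ _).symm
        _ = q * b := by rw [hy'x']
        _ = b := hb
    · intro b hb
      simp only [Set.mem_setOf_eq] at hb
      refine ⟨y' * b, ?_, ?_⟩
      · simp only [Set.mem_setOf_eq]
        rw [← mul_assoc, hqy']
      · show x' * (y' * b) = b
        rw [← mul_assoc, hx'y', hb]
    · intro a b _ _; exact mul_add _ _ _
    · intro a b _; exact (mul_assoc _ _ _).symm
    · intro δ a ha
      constructor
      · intro h; exact SetLike.mul_mem_graded hx'mem h
      · intro h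
        have : a = y' * (x' * a) := by
          rw [← mul_assoc, hy'x', ha]
        rw [this]
        have := SetLike.mul_mem_graded hy'mem h
        simpa using this
  · rintro ⟨f, ⟨hmaps, hinj, hsurj⟩, hadd, hlin, hgr⟩
    have hqS : q ∈ {a : A | q * a = a} := hq
    have hpT : p ∈ {a : A | p * a = a} := hp
    -- y := f q
    set y := f q with hydef
    have hfa : ∀ a : A, q * a = a → f a = y * a := by
      intro a ha
      calc f a = f (q * a) := by rw [ha]
        _ = f q * a := hlin q a hq
        _ = y * a := rfl
    have hpy : p * y = y := hmaps hqS
    -- x := preimage of p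
    obtain ⟨x, hxS, hfx⟩ := hsurj hpT
    have hqx : q * x = x := hxS
    have hyx : y * x = p := by rw [← hfa x hqx, hfx]
    have hxy : x * y = q := by
      have hxyS : x * y ∈ {a : A | q * a = a} := by
        simp only [Set.mem_setOf_eq, ← mul_assoc, hqx]
      apply hinj hxyS hqS
      calc f (x * y) = f x * y := hlin x y hqx
        _ = p * y := by rw [hfx]
        _ = y := hpy
        _ = f q := rfl
    have hymem : y ∈ 𝒜 γ := by
      have := (hgr 0 q hq).mp hq0
      simpa using this
    have hxmem : x ∈ 𝒜 (-γ) := by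
      have := (hgr (-γ) x hqx)
      rw [this, hfx]
      simpa using hp0
    exact ⟨y, x, hymem, hxmem, hyx, hxy⟩

/-- Let `A` be a `Γ`-graded ring and `p, q` homogeneous idempotents
(necessarily in `A₀`).  Then `p` and `q` are graded algebraically equivalent (there are
`x ∈ A_γ`, `y ∈ A_{-γ}` with `x y = p`, `y x = q` for some `γ`) if and only if
`qA ≅_gr pA(γ)` for some `γ ∈ Γ`; and the equivalence is realized by elements of `A₀`
if and only if `qA ≅_gr pA`. -/
theorem stmt_16 {Γ : Type*} [AddCommGroup Γ] [DecidableEq Γ]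
    {A : Type*} [Ring A]
    (𝒜 : Γ → AddSubgroup A) [GradedRing 𝒜]
    (p q : A) (hp : p * p = p) (hq : q * q = q)
    (hp0 : p ∈ 𝒜 0) (hq0 : q ∈ 𝒜 0) :
    ((∃ (γ : Γ) (x y : A), x ∈ 𝒜 γ ∧ y ∈ 𝒜 (-γ) ∧ x * y = p ∧ y * x = q) ↔
      ∃ γ : Γ, grIsoShift 𝒜 p q γ) ∧
    ((∃ x y : A, x ∈ 𝒜 0 ∧ y ∈ 𝒜 0 ∧ x * y = p ∧ y * x = q) ↔ grIsoShift 𝒜 p q 0) := by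
  constructor
  · exact exists_congr fun γ => aux_equiv_iff 𝒜 p q hp hq hp0 hq0 γ
  · have := aux_equiv_iff 𝒜 p q hp hq hp0 hq0 0
    rwa [neg_zero] at this
end

section
/- Let A be a Γ-graded field, n a positive integer, and γ̄ ∈ Γ^n. Partition the shifts γ_1,…,γ_n into k classes according to their cosets modulo Γ_A, with class sizes r_1,…,r_k (so Σ r_l = n). Then the zero-component M_n(A)(γ̄)_0 is isomorphic as a ring to M_{r_1}(A_0) ⊕ … ⊕ M_{r_k}(A_0); in particular M_n(A)(γ̄)_0 is a unit-regular ring. -/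
/-- The zero-component `A₀` of a graded ring, as a subring. -/
def zeroSubring {Γ : Type*} [AddCommGroup Γ] {A : Type*} [Ring A]
    (𝒜 : Γ → AddSubgroup A) [SetLike.GradedMonoid 𝒜] : Subring A where
  carrier := 𝒜 0
  zero_mem' := zero_mem _
  add_mem' := fun ha hb => add_mem ha hb
  neg_mem' := fun ha => neg_mem ha
  one_mem' := SetLike.one_mem_graded 𝒜
  mul_mem' := fun ha hb => by
    have h := SetLike.mul_mem_graded ha hb
    simpa using h

/-- The zero-component `Mₙ(A)(γ₁,…,γₙ)₀` of the graded matrix ring, as a subring of the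
matrix ring: matrices `(a_{ij})` with `a_{ij} ∈ 𝒜 (γ_j - γ_i)`. -/
def matZeroSubring {Γ : Type*} [AddCommGroup Γ] {A : Type*} [Ring A]
    (𝒜 : Γ → AddSubgroup A) [SetLike.GradedMonoid 𝒜] {n : ℕ} (γs : Fin n → Γ) :
    Subring (Matrix (Fin n) (Fin n) A) where
  carrier := {M | ∀ i j, M i j ∈ 𝒜 (γs j - γs i)}
  zero_mem' := by
    intro i j
    rw [Matrix.zero_apply]
    exact zero_mem _
  add_mem' := by
    intro M N hM hN i j
    rw [Matrix.add_apply]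
    exact add_mem (hM i j) (hN i j)
  neg_mem' := by
    intro M hM i j
    rw [Matrix.neg_apply]
    exact neg_mem (hM i j)
  one_mem' := by
    intro i j
    by_cases h : i = j
    · subst h
      rw [Matrix.one_apply_eq, sub_self]
      exact SetLike.one_mem_graded 𝒜
    · rw [Matrix.one_apply_ne h]
      exact zero_mem _
  mul_mem' := by
    intro M N hM hN i j
    rw [Matrix.mul_apply]
    refine sum_mem fun k _ => ?_
    have h := SetLike.mul_mem_graded (hM i k) (hN k j)
    have e : γs k - γs i + (γs j - γs k) = γs j - γs i := by abel
    rwa [e] at h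

/-!
Conjugating by the diagonal matrix of homogeneous units `uᵢ ∈ A_{γᵢ - δᵢ}` identifies
`Mₙ(A)(γ̄)₀` with `Mₙ(A)(δ̄)₀`. In a graded field such units exist as soon as `γᵢ - δᵢ ∈ Γ_A`, so
every shift may be replaced by one fixed representative of its coset. Afterwards the entry in
position `(i, j)` lies in `A₀` when `i, j` are in the same class and in `A_{δⱼ - δᵢ} = 0`
otherwise, so the ring splits into the blocks `M_{r_l}(A₀)`.

`A₀` is a field, and an endomorphism `f` of a finite-dimensional vector space is unit-regular:
matching a complement of `ker f` with `range f` through `f`, and `ker f` with a complement of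
`range f`, gives an automorphism `h` with `f = h p`, where `p` is the projection onto the first
complement along `ker f`; then `f h⁻¹ f = h p² = h p = f`.
-/

def IsUnitRegular (M : Type*) [Monoid M] : Prop :=
  ∀ a : M, ∃ u : Mˣ, a * u * a = a

namespace IsUnitRegular

theorem of_mulEquiv {M N : Type*} [Monoid M] [Monoid N] (h : IsUnitRegular M) (f : M ≃* N) :
    IsUnitRegular N := by
  intro b
  obtain ⟨u, hu⟩ := h (f.symm b)
  exact ⟨Units.map f.toMonoidHom u, by simpa using congrArg f hu⟩

theorem pi {ι : Type*} {M : ι → Type*} [∀ i, Monoid (M i)] (h : ∀ i, IsUnitRegular (M i)) :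
    IsUnitRegular (∀ i, M i) := by
  intro a
  choose u hu using fun i => h i (a i)
  exact ⟨MulEquiv.piUnits.symm u, funext hu⟩

end IsUnitRegular

theorem mul_inv_mul_eq_self_of_eq_units_mul {M : Type*} [Monoid M] {a e : M} {u : Mˣ}
    (he : IsIdempotentElem e) (ha : a = u * e) : a * ↑u⁻¹ * a = a := by
  rw [ha, mul_assoc, Units.inv_mul_cancel_left, mul_assoc, he.eq]

theorem Module.End.isUnitRegular {K V : Type*} [DivisionRing K] [AddCommGroup V] [Module K V]
    [FiniteDimensional K V] : IsUnitRegular (Module.End K V) := by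
  intro f
  obtain ⟨C, hC⟩ := (LinearMap.ker f).exists_isCompl
  obtain ⟨D, hD⟩ := (LinearMap.range f).exists_isCompl
  let fC : C ≃ₗ[K] LinearMap.range f :=
    (Submodule.quotientEquivOfIsCompl _ C hC).symm ≪≫ₗ f.quotKerEquivRange
  have hfC : ∀ x : C, (fC x : V) = f x := fun x => by
    simp [fC, Submodule.quotientEquivOfIsCompl_symm_apply]
  let φ : LinearMap.ker f ≃ₗ[K] D := LinearEquiv.ofFinrankEq _ _ <| by
    have := Submodule.finrank_add_eq_of_isCompl hD
    have := LinearMap.finrank_range_add_finrank_ker f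
    omega
  let h : V ≃ₗ[K] V := (Submodule.prodEquivOfIsCompl C _ hC.symm).symm ≪≫ₗ fC.prodCongr φ ≪≫ₗ
    Submodule.prodEquivOfIsCompl _ D hD
  refine ⟨((LinearMap.GeneralLinearGroup.generalLinearEquiv K V).symm h)⁻¹,
    mul_inv_mul_eq_self_of_eq_units_mul (Submodule.isIdempotentElem_projection hC.symm) ?_⟩
  ext v
  have hker : v - C.projection _ hC.symm v ∈ LinearMap.ker f := Submodule.sub_projection_mem _ v
  rw [LinearMap.mem_ker, map_sub, sub_eq_zero] at hker
  have hh : h (C.projection _ hC.symm v) = f (C.projection _ hC.symm v) := by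
    rw [Submodule.projection_apply]
    simp only [h, LinearEquiv.trans_apply, Submodule.prodEquivOfIsCompl_symm_apply_left,
      LinearEquiv.prodCongr_apply, map_zero, Submodule.coe_prodEquivOfIsCompl', hfC,
      ZeroMemClass.coe_zero, add_zero]
  exact hker.trans hh.symm

theorem Matrix.isUnitRegular {K m : Type*} [Field K] [Fintype m] [DecidableEq m] :
    IsUnitRegular (Matrix m m K) :=
  (Module.End.isUnitRegular (K := K) (V := m → K)).of_mulEquiv
    Matrix.toLinAlgEquiv'.symm.toMulEquiv

section GradedRing

variable {Γ : Type*} [AddCommGroup Γ] [DecidableEq Γ] {A : Type*}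

theorem exists_units_mem_of_ne_bot {ι : Type*} [Ring A] (𝒜 : ι → AddSubgroup A)
    (hdiv : ∀ a : A, a ≠ 0 → (∃ γ, a ∈ 𝒜 γ) → IsUnit a) {γ : ι} (h : 𝒜 γ ≠ ⊥) :
    ∃ u : Aˣ, (u : A) ∈ 𝒜 γ := by
  obtain ⟨⟨a, ha⟩, ha0⟩ := AddSubgroup.ne_bot_iff_exists_ne_zero.mp h
  obtain ⟨u, rfl⟩ := hdiv a (by simpa using ha0) ⟨γ, ha⟩
  exact ⟨u, ha⟩

theorem SetLike.units_inv_mem_graded [Ring A] (𝒜 : Γ → AddSubgroup A) [GradedRing 𝒜] {γ : Γ}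
    {u : Aˣ} (hu : (u : A) ∈ 𝒜 γ) : ((u⁻¹ : Aˣ) : A) ∈ 𝒜 (-γ) := by
  have h : (u : A) * (DirectSum.decompose 𝒜 (u⁻¹ : Aˣ) (-γ) : A) = 1 := by
    rw [← DirectSum.coe_decompose_mul_add_of_left_mem 𝒜 hu, add_neg_cancel, Units.mul_inv,
      DirectSum.decompose_of_mem_same 𝒜 SetLike.GradedOne.one_mem]
  rw [Units.inv_eq_of_mul_eq_one_right h]
  exact SetLike.coe_mem _

theorem SetLike.units_mul_mem_graded_iff [Ring A] (𝒜 : Γ → AddSubgroup A) [GradedRing 𝒜]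
    {β γ γ' : Γ} (h : β + γ = γ') {u : Aˣ} (hu : (u : A) ∈ 𝒜 β) {x : A} :
    (u : A) * x ∈ 𝒜 γ' ↔ x ∈ 𝒜 γ := by
  refine ⟨fun hx => ?_, fun hx => h ▸ SetLike.mul_mem_graded hu hx⟩
  have := SetLike.mul_mem_graded (SetLike.units_inv_mem_graded 𝒜 hu) hx
  rwa [Units.inv_mul_cancel_left, ← h, neg_add_cancel_left] at this

variable [CommRing A] (𝒜 : Γ → AddSubgroup A) [GradedRing 𝒜]

theorem isField_zeroSubring [Nontrivial A]
    (hdiv : ∀ a : A, a ≠ 0 → (∃ γ, a ∈ 𝒜 γ) → IsUnit a) : IsField (zeroSubring 𝒜) where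
  exists_pair_ne := ⟨0, 1, zero_ne_one⟩
  mul_comm := mul_comm
  mul_inv_cancel {a} ha := by
    obtain ⟨u, hu⟩ := hdiv a (by simpa using ha) ⟨0, a.2⟩
    have hinv := SetLike.units_inv_mem_graded 𝒜 (hu ▸ a.2)
    rw [neg_zero] at hinv
    exact ⟨⟨_, hinv⟩, Subtype.ext <| show (a : A) * ↑u⁻¹ = 1 by rw [← hu, Units.mul_inv]⟩

end GradedRing

namespace Matrix

variable {ι R : Type*} [Fintype ι] [Ring R]

def conjDiagonal (u : ι → Rˣ) : Matrix ι ι R ≃+* Matrix ι ι R where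
  toFun M := of fun i j => u i * M i j * ↑(u j)⁻¹
  invFun M := of fun i j => ↑(u i)⁻¹ * M i j * u j
  left_inv M := by ext; simp [mul_assoc]
  right_inv M := by ext; simp [mul_assoc]
  map_mul' M N := by ext; simp [mul_apply, Finset.mul_sum, Finset.sum_mul, mul_assoc]
  map_add' M N := by ext; simp [mul_add, add_mul]

@[simp]
theorem conjDiagonal_symm_apply (u : ι → Rˣ) (M : Matrix ι ι R) (i j : ι) :
    (conjDiagonal u).symm M i j = ↑(u i)⁻¹ * M i j * u j :=
  rfl

end Matrix

section MatZeroSubring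

variable {Γ : Type*} [AddCommGroup Γ] [DecidableEq Γ] {A : Type*} [CommRing A]
  (𝒜 : Γ → AddSubgroup A) [GradedRing 𝒜] {n : ℕ}

theorem mem_zeroSubring_iff {x : A} : x ∈ zeroSubring 𝒜 ↔ x ∈ 𝒜 0 :=
  Iff.rfl

def matZeroSubringEquivOfUnits {γs δs : Fin n → Γ} (u : Fin n → Aˣ)
    (hu : ∀ i, (u i : A) ∈ 𝒜 (γs i - δs i)) : matZeroSubring 𝒜 γs ≃+* matZeroSubring 𝒜 δs :=
  (Matrix.conjDiagonal u).subringMap.trans <| RingEquiv.subringCongr <| by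
    ext M
    refine (Subring.mem_map_equiv (f := Matrix.conjDiagonal u)).trans (forall₂_congr fun i j => ?_)
    rw [Matrix.conjDiagonal_symm_apply, mul_right_comm, ← Units.val_mul]
    have hunit := SetLike.mul_mem_graded (SetLike.units_inv_mem_graded 𝒜 (hu i)) (hu j)
    rw [← Units.val_mul] at hunit
    exact SetLike.units_mul_mem_graded_iff 𝒜 (by abel) hunit

variable {κ : Type*} {c : Fin n → κ} {ε : κ → Γ}

theorem matZeroSubring_apply_eq_zero_of_ne (hε : ∀ i j, c i ≠ c j → 𝒜 (ε (c j) - ε (c i)) = ⊥)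
    (M : matZeroSubring 𝒜 (fun i => ε (c i))) {i j : Fin n} (h : c i ≠ c j) :
    (M : Matrix (Fin n) (Fin n) A) i j = 0 := by
  have := M.2 i j
  rwa [hε i j h, AddSubgroup.mem_bot] at this

def matZeroSubringBlock (M : matZeroSubring 𝒜 (fun i => ε (c i))) (l : κ) :
    Matrix {i // c i = l} {i // c i = l} (zeroSubring 𝒜) :=
  Matrix.of fun p q => ⟨(M : Matrix (Fin n) (Fin n) A) p q, by
    have : _ ∈ 𝒜 (ε (c q) - ε (c p)) := M.2 p q
    rwa [q.2, p.2, sub_self] at this⟩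

@[simp]
theorem coe_matZeroSubringBlock_apply (M : matZeroSubring 𝒜 (fun i => ε (c i))) (l : κ)
    (p q : {i // c i = l}) :
    (matZeroSubringBlock 𝒜 M l p q : A) = (M : Matrix (Fin n) (Fin n) A) p q :=
  rfl

def matZeroSubringEquivPi [DecidableEq κ] (hε : ∀ i j, c i ≠ c j → 𝒜 (ε (c j) - ε (c i)) = ⊥) :
    matZeroSubring 𝒜 (fun i => ε (c i)) ≃+*
      ((l : κ) → Matrix {i // c i = l} {i // c i = l} (zeroSubring 𝒜)) where
  toFun := matZeroSubringBlock 𝒜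
  invFun N := ⟨Matrix.of fun i j => if h : c i = c j then (N (c j) ⟨i, h⟩ ⟨j, rfl⟩ : A) else 0,
    fun i j => by
      by_cases h : c i = c j
      · simpa [h] using (mem_zeroSubring_iff 𝒜).mp (N (c j) ⟨i, h⟩ ⟨j, rfl⟩).2
      · simp [h]⟩
  left_inv M := by
    ext i j
    by_cases h : c i = c j
    · simp [h]
    · simp [h, matZeroSubring_apply_eq_zero_of_ne 𝒜 hε M h]
  right_inv N := by
    funext l p ⟨q, hq⟩
    subst hq
    ext
    simp [p.2]
  map_mul' M N := by
    funext l
    ext p q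
    simp only [Pi.mul_apply, Matrix.mul_apply, AddSubmonoidClass.coe_finsetSum,
      MulMemClass.coe_mul, coe_matZeroSubringBlock_apply]
    refine (Finset.sum_filter_of_ne (p := (c · = l)) fun m _ hm => ?_).symm.trans
      (Finset.sum_subtype _ (fun m => by simp) _)
    by_contra hml
    rw [matZeroSubring_apply_eq_zero_of_ne 𝒜 hε M (p.2.trans_ne (Ne.symm hml)), zero_mul] at hm
    exact hm rfl
  map_add' M N := rfl

end MatZeroSubring

theorem stmt_17_general {Γ : Type*} [AddCommGroup Γ] [DecidableEq Γ]
    {A : Type*} [CommRing A] [Nontrivial A]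
    (𝒜 : Γ → AddSubgroup A) [GradedRing 𝒜]
    (hdiv : ∀ a : A, a ≠ 0 → (∃ γ, a ∈ 𝒜 γ) → IsUnit a)
    (Λ : AddSubgroup Γ) (hΛ : ∀ γ : Γ, γ ∈ Λ ↔ 𝒜 γ ≠ ⊥)
    {n k : ℕ} (γs : Fin n → Γ) (r : Fin k → ℕ) (c : Fin n → Fin k)
    (hc : ∀ i j : Fin n, c i = c j ↔ γs i - γs j ∈ Λ)
    (hr : ∀ l : Fin k, r l = Fintype.card {i : Fin n // c i = l}) :
    Nonempty ((matZeroSubring 𝒜 γs) ≃+*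
      ((l : Fin k) → Matrix (Fin (r l)) (Fin (r l)) (zeroSubring 𝒜))) ∧
    ∀ a : matZeroSubring 𝒜 γs, ∃ u : (matZeroSubring 𝒜 γs)ˣ, a * ↑u * a = a := by
  let ε : Fin k → Γ := fun l => if h : ∃ i, c i = l then γs h.choose else 0
  have hrep : ∀ i, γs i - ε (c i) ∈ Λ := fun i => by
    have h : ∃ j, c j = c i := ⟨i, rfl⟩
    simpa only [ε, dif_pos h] using (hc i _).mp h.choose_spec.symm
  have hε : ∀ i j, c i ≠ c j → 𝒜 (ε (c j) - ε (c i)) = ⊥ := fun i j hij => by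
    by_contra hne
    refine hij ((hc i j).mpr ?_)
    convert Λ.sub_mem (Λ.sub_mem (hrep i) ((hΛ _).mpr hne)) (hrep j) using 1
    abel
  choose u hu using fun i => exists_units_mem_of_ne_bot 𝒜 hdiv ((hΛ _).mp (hrep i))
  let E := (matZeroSubringEquivOfUnits 𝒜 u hu).trans <| (matZeroSubringEquivPi 𝒜 hε).trans <|
    RingEquiv.piCongrRight fun l => Matrix.reindexRingEquiv _ (Fintype.equivFinOfCardEq (hr l).symm)
  let _ : Field (zeroSubring 𝒜) := (isField_zeroSubring 𝒜 hdiv).toField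
  exact ⟨⟨E⟩, (IsUnitRegular.pi fun l => Matrix.isUnitRegular).of_mulEquiv E.symm.toMulEquiv⟩

/-- Let `A` be a `Γ`-graded field with support `Λ = Γ_A` and `γ̄ ∈ Γⁿ`.
Partition the shifts `γ₁,…,γₙ` into `k` classes according to their cosets modulo `Γ_A`
(encoded by `c : Fin n → Fin k`), with class sizes `r₁,…,r_k`.  Then
`Mₙ(A)(γ̄)₀ ≅ M_{r₁}(A₀) ⊕ … ⊕ M_{r_k}(A₀)` as rings; in particular `Mₙ(A)(γ̄)₀` is a
unit-regular ring. -/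
theorem stmt_17 {Γ : Type*} [AddCommGroup Γ] [DecidableEq Γ]
    {A : Type*} [CommRing A] [Nontrivial A]
    (𝒜 : Γ → AddSubgroup A) [GradedRing 𝒜]
    (hdiv : ∀ a : A, a ≠ 0 → (∃ γ, a ∈ 𝒜 γ) → IsUnit a)
    (Λ : AddSubgroup Γ) (hΛ : ∀ γ : Γ, γ ∈ Λ ↔ 𝒜 γ ≠ ⊥)
    {n k : ℕ} (γs : Fin n → Γ) (r : Fin k → ℕ) (c : Fin n → Fin k)
    (hc : ∀ i j : Fin n, c i = c j ↔ γs i - γs j ∈ Λ)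
    (hcs : Function.Surjective c)
    (hr : ∀ l : Fin k, r l = Fintype.card {i : Fin n // c i = l}) :
    Nonempty ((matZeroSubring 𝒜 γs) ≃+*
      ((l : Fin k) → Matrix (Fin (r l)) (Fin (r l)) (zeroSubring 𝒜))) ∧
    ∀ a : matZeroSubring 𝒜 γs, ∃ u : (matZeroSubring 𝒜 γs)ˣ, a * ↑u * a = a :=
  stmt_17_general 𝒜 hdiv Λ hΛ γs r c hc hr
end

section
/- Give Z^n the Z[x,x^{-1}]-module structure where x acts by the cyclic shift x·(a_1,…,a_n) = (a_n, a_1,…,a_{n−1}), with the componentwise partial order. Let I, J be countable sets and n_i, m_j positive integers (i ∈ I, j ∈ J). If f : ⊕_{i∈I} Z^{n_i} → ⊕_{j∈J} Z^{m_j} is an order-preserving Z[x,x^{-1}]-module isomorphism with order-preserving inverse, then there is a bijection π : I → J such that n_i = m_{π(i)} and f maps the summand Z^{n_i} onto the summand Z^{m_{π(i)}} for every i ∈ I. -/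
/-!
The unit vectors `e_{i,k}` are exactly the minimal strictly positive elements of
`⊕_{i∈I} ℤ^{n_i}`, and an additive bijection that is positive in both directions is an order
isomorphism, so `f` permutes unit vectors. Commuting with the shift, `f` sends the `x`-orbit
`{e_{i,k}}_k` of one unit vector onto the orbit `{e_{j,l}}_l` of its image, hence summand onto
summand; the orbit lengths `n_i` and `m_j` then divide each other.
-/

/-- The action of `x` on `⊕_{i∈I} ℤ^{n_i}`: on each summand `ℤ^{n_i}` (realized as
`ZMod (n i) → ℤ`), `x` acts by the cyclic shift `x⬝(a₁,…,a_n) = (a_n, a₁, …, a_{n-1})`. -/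
def cyclicShift {I : Type*} (n : I → ℕ) :
    (Π₀ i : I, (ZMod (n i) → ℤ)) → Π₀ i : I, (ZMod (n i) → ℤ) :=
  DFinsupp.mapRange (fun _ v k => v (k - 1)) (fun _ => rfl)

section OrderedGroup

variable {G H : Type*} [AddCommGroup G] [PartialOrder G] [IsOrderedAddMonoid G]
  [AddCommGroup H] [PartialOrder H] [IsOrderedAddMonoid H]

theorem AddEquiv.minimal_pos_apply (f : G ≃+ H) (hf : ∀ g, 0 ≤ g → 0 ≤ f g)
    (hf' : ∀ h, 0 ≤ h → 0 ≤ f.symm h) {x : G} (hx : Minimal (0 < ·) x) :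
    Minimal (0 < ·) (f x) := by
  let e : G ≃o H := f.toEquiv.toOrderIso ((monotone_iff_map_nonneg f).2 hf)
    ((monotone_iff_map_nonneg f.symm).2 hf')
  have hpos (a : G) : 0 < f a ↔ 0 < a := by
    rw [← e.lt_iff_lt, show e 0 = 0 from map_zero f]
    rfl
  refine ⟨(hpos x).2 hx.prop, fun y hy hyx => ?_⟩
  obtain ⟨y, rfl⟩ := f.surjective y
  exact e.le_iff_le.2 (hx.le_of_le ((hpos y).1 hy) (e.le_iff_le.1 hyx))

end OrderedGroup

section UnitVec

variable {I J : Type*} {κ : I → Type*}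

theorem exists_pos_apply {g : Π₀ i, (κ i → ℤ)} (hg : 0 < g) : ∃ i k, 0 < g i k := by
  by_contra! h
  exact hg.ne' (le_antisymm h hg.le)

variable [DecidableEq I] [∀ i, DecidableEq (κ i)]

def unitVec (i : I) (k : κ i) : Π₀ i, (κ i → ℤ) :=
  DFinsupp.single i (Pi.single k 1)

theorem unitVec_apply_self (i : I) (k q : κ i) : unitVec i k i q = if q = k then 1 else 0 := by
  simp [unitVec, Pi.single_apply]

theorem unitVec_apply_of_ne {i p : I} (h : p ≠ i) (k : κ i) : unitVec i k p = 0 :=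
  DFinsupp.single_eq_of_ne h

theorem unitVec_injective (i : I) : Function.Injective (unitVec (κ := κ) i) := fun k k' h => by
  simpa [unitVec_apply_self] using congrFun (DFunLike.congr_fun h i) k

theorem unitVec_pos (i : I) (k : κ i) : 0 < unitVec i k := by
  refine lt_of_le_of_ne (fun p q => ?_) fun h => ?_
  · by_cases hp : p = i
    · subst hp
      rw [unitVec_apply_self]
      split_ifs <;> simp
    · simp [unitVec_apply_of_ne hp]
  · simpa [unitVec_apply_self] using congrFun (DFunLike.congr_fun h i) k

theorem unitVec_le {g : Π₀ i, (κ i → ℤ)} (hg : 0 ≤ g) {i : I} {k : κ i} (hk : 0 < g i k) :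
    unitVec i k ≤ g := fun p q => by
  by_cases hp : p = i
  · subst hp
    rw [unitVec_apply_self]
    split_ifs with hq
    · subst hq; exact hk
    · exact hg p q
  · simpa [unitVec_apply_of_ne hp] using hg p q

theorem minimal_pos_iff {g : Π₀ i, (κ i → ℤ)} :
    Minimal (0 < ·) g ↔ ∃ i k, g = unitVec i k := by
  constructor
  · intro hg
    obtain ⟨i, k, hk⟩ := exists_pos_apply hg.prop
    have hle := unitVec_le hg.prop.le hk
    exact ⟨i, k, le_antisymm (hg.le_of_le (unitVec_pos i k) hle) hle⟩
  · rintro ⟨i, k, rfl⟩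
    refine ⟨unitVec_pos i k, fun y hy hyu => unitVec_le hy.le ?_⟩
    by_contra! hyk
    refine hy.not_ge fun p q => ?_
    by_cases hp : p = i
    · subst hp
      by_cases hq : q = k
      · subst hq; exact hyk
      · simpa [unitVec_apply_self, hq] using hyu p q
    · simpa [unitVec_apply_of_ne hp] using hyu p q

variable (κ) in
def summand (i : I) : AddSubgroup (Π₀ i, (κ i → ℤ)) where
  carrier := {g | ∀ i', i' ≠ i → g i' = 0}
  add_mem' hg hh i' hi' := by simp [hg i' hi', hh i' hi']
  zero_mem' _ _ := rfl
  neg_mem' hg i' hi' := by simp [hg i' hi']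

theorem unitVec_mem_summand_iff {i j : I} (k : κ i) : unitVec i k ∈ summand κ j ↔ i = j := by
  refine ⟨fun h => ?_, fun h p hp => unitVec_apply_of_ne (h ▸ hp) k⟩
  by_contra hij
  simpa [unitVec_apply_self] using congrFun (h i hij) k

theorem eq_sum_unitVec {i : I} [Fintype (κ i)] {g : Π₀ i, (κ i → ℤ)} (hg : g ∈ summand κ i) :
    g = ∑ k, g i k • unitVec i k := by
  ext p q
  rw [DFinsupp.finsetSum_apply, Finset.sum_apply]
  by_cases hp : p = i
  · subst hp
    simp [unitVec_apply_self]
  · simp [hg p hp, unitVec_apply_of_ne hp]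

theorem image_summand_subset {ν : J → Type*} {F : Type*}
    [FunLike F (Π₀ i, (κ i → ℤ)) (Π₀ j, (ν j → ℤ))] [AddMonoidHomClass F _ _] (f : F)
    {i : I} {j : J} [Fintype (κ i)]
    (h : ∀ k, f (unitVec i k) ∈ summand ν j) : f '' summand κ i ⊆ summand ν j := by
  rintro _ ⟨g, hg, rfl⟩
  rw [eq_sum_unitVec hg, map_sum]
  exact AddSubgroup.sum_mem _ fun k _ => by
    rw [map_zsmul]; exact AddSubgroup.zsmul_mem _ (h k) _

theorem AddEquiv.exists_map_unitVec {ν : J → Type*} [DecidableEq J] [∀ j, DecidableEq (ν j)]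
    (f : (Π₀ i, (κ i → ℤ)) ≃+ Π₀ j, (ν j → ℤ)) (hf : ∀ g, 0 ≤ g → 0 ≤ f g)
    (hf' : ∀ h, 0 ≤ h → 0 ≤ f.symm h) (i : I) (k : κ i) : ∃ j l, f (unitVec i k) = unitVec j l :=
  minimal_pos_iff.1 (f.minimal_pos_apply hf hf' (minimal_pos_iff.2 ⟨i, k, rfl⟩))

end UnitVec

section CyclicShift

variable {I J : Type*} {n : I → ℕ} {m : J → ℕ}

theorem AddEquiv.symm_map_cyclicShift (f : (Π₀ i, (ZMod (n i) → ℤ)) ≃+ Π₀ j, (ZMod (m j) → ℤ))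
    (hfx : ∀ g, f (cyclicShift n g) = cyclicShift m (f g)) (h : Π₀ j, (ZMod (m j) → ℤ)) :
    f.symm (cyclicShift m h) = cyclicShift n (f.symm h) :=
  f.injective (by rw [hfx, f.apply_symm_apply, f.apply_symm_apply])

variable [DecidableEq I] [DecidableEq J]

theorem cyclicShift_unitVec (i : I) (k : ZMod (n i)) :
    cyclicShift n (unitVec i k) = unitVec i (k + 1) := by
  rw [cyclicShift, unitVec, DFinsupp.mapRange_single]
  congr 1
  ext q
  simp [Pi.single_apply, sub_eq_iff_eq_add]

variable {f : (Π₀ i, (ZMod (n i) → ℤ)) → Π₀ j, (ZMod (m j) → ℤ)}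
  (hfx : ∀ g, f (cyclicShift n g) = cyclicShift m (f g))
  {i : I} {j : J} {k : ZMod (n i)} {l : ZMod (m j)}
include hfx

theorem map_unitVec_add_natCast (h : f (unitVec i k) = unitVec j l) (t : ℕ) :
    f (unitVec i (k + t)) = unitVec j (l + t) := by
  induction t with
  | zero => simpa using h
  | succ t ih =>
    push_cast
    rw [← add_assoc, ← add_assoc, ← cyclicShift_unitVec, hfx, ih, cyclicShift_unitVec]

theorem dvd_of_map_unitVec (h : f (unitVec i k) = unitVec j l) : m j ∣ n i := by
  have := map_unitVec_add_natCast hfx h (n i)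
  rw [ZMod.natCast_self, add_zero, h] at this
  exact (ZMod.natCast_eq_zero_iff _ _).1 (left_eq_add.1 (unitVec_injective j this))

theorem map_unitVec_mem_summand [NeZero (n i)] (h : f (unitVec i k) = unitVec j l)
    (k' : ZMod (n i)) : f (unitVec i k') ∈ summand (fun j => ZMod (m j)) j := by
  have := map_unitVec_add_natCast hfx h (k' - k).val
  rw [ZMod.natCast_zmod_val, add_sub_cancel] at this
  rw [this, unitVec_mem_summand_iff]

end CyclicShift

section Iso

variable {I J : Type*} [DecidableEq I] [DecidableEq J] {n : I → ℕ} {m : J → ℕ}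
  {f : (Π₀ i, (ZMod (n i) → ℤ)) ≃+ Π₀ j, (ZMod (m j) → ℤ)}
  (hfx : ∀ g, f (cyclicShift n g) = cyclicShift m (f g))
  {i : I} {j : J} {k : ZMod (n i)} {l : ZMod (m j)}
include hfx

theorem AddEquiv.eq_of_map_unitVec (h : f (unitVec i k) = unitVec j l) : n i = m j :=
  Nat.dvd_antisymm (dvd_of_map_unitVec (f.symm_map_cyclicShift hfx) (f.symm_apply_eq.2 h.symm))
    (dvd_of_map_unitVec hfx h)

theorem AddEquiv.image_summand_eq [NeZero (n i)] [NeZero (m j)]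
    (h : f (unitVec i k) = unitVec j l) :
    f '' summand (fun i => ZMod (n i)) i = summand (fun j => ZMod (m j)) j := by
  refine (image_summand_subset f (map_unitVec_mem_summand hfx h)).antisymm fun g hg => ?_
  have hsymm := image_summand_subset f.symm
    (map_unitVec_mem_summand (f.symm_map_cyclicShift hfx) (f.symm_apply_eq.2 h.symm))
  exact ⟨f.symm g, hsymm ⟨g, hg, rfl⟩, f.apply_symm_apply g⟩

end Iso

theorem stmt_18_general {I J : Type*}
    (n : I → ℕ) (m : J → ℕ) (hn : ∀ i, 0 < n i) (hm : ∀ j, 0 < m j)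
    (f : (Π₀ i : I, (ZMod (n i) → ℤ)) ≃+ (Π₀ j : J, (ZMod (m j) → ℤ)))
    (hfx : ∀ g, f (cyclicShift n g) = cyclicShift m (f g))
    (hford : ∀ g, (∀ i k, 0 ≤ g i k) → ∀ j k, 0 ≤ f g j k)
    (hfinv : ∀ h, (∀ j k, 0 ≤ h j k) → ∀ i k, 0 ≤ f.symm h i k) :
    ∃ π : I → J, Function.Bijective π ∧ (∀ i, n i = m (π i)) ∧
      ∀ i, ⇑f '' {g | ∀ i', i' ≠ i → g i' = 0} = {h | ∀ j', j' ≠ π i → h j' = 0} := by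
  classical
  have : ∀ i, NeZero (n i) := fun i => ⟨(hn i).ne'⟩
  have : ∀ j, NeZero (m j) := fun j => ⟨(hm j).ne'⟩
  have hfx' := f.symm_map_cyclicShift hfx
  choose π l hπ using fun i => f.exists_map_unitVec hford hfinv i 0
  choose ρ l' hρ using fun j => f.symm.exists_map_unitVec hfinv hford j 0
  have hρπ (i : I) : f.symm (unitVec (π i) (l i)) = unitVec i 0 := f.symm_apply_eq.2 (hπ i).symm
  have hπρ (j : J) : f (unitVec (ρ j) (l' j)) = unitVec j 0 := f.eq_symm_apply.1 (hρ j).symm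
  have hleft (i : I) : ρ (π i) = i := by
    have := map_unitVec_mem_summand hfx' (hρ (π i)) (l i)
    rwa [hρπ, unitVec_mem_summand_iff, eq_comm] at this
  have hright (j : J) : π (ρ j) = j := by
    have := map_unitVec_mem_summand hfx (hπ (ρ j)) (l' j)
    rwa [hπρ, unitVec_mem_summand_iff, eq_comm] at this
  exact ⟨π, Function.bijective_iff_has_inverse.2 ⟨ρ, hleft, hright⟩,
    fun i => f.eq_of_map_unitVec hfx (hπ i), fun i => f.image_summand_eq hfx (hπ i)⟩

/-- Give `ℤ^n` the `ℤ[x,x⁻¹]`-module structure in which `x` acts by the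
cyclic shift, with the componentwise partial order.  Let `I, J` be countable sets and
`n_i, m_j` positive integers.  If `f : ⊕_{i∈I} ℤ^{n_i} → ⊕_{j∈J} ℤ^{m_j}` is an
order-preserving `ℤ[x,x⁻¹]`-module isomorphism (an additive bijection commuting with the
`x`-action) with order-preserving inverse, then there is a bijection `π : I → J` with
`n_i = m_{π(i)}` such that `f` maps the summand `ℤ^{n_i}` onto the summand `ℤ^{m_{π(i)}}`
for every `i ∈ I`. -/
theorem stmt_18 {I J : Type*} [Countable I] [Countable J]
    [DecidableEq I] [DecidableEq J]
    (n : I → ℕ) (m : J → ℕ) (hn : ∀ i, 0 < n i) (hm : ∀ j, 0 < m j)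
    (f : (Π₀ i : I, (ZMod (n i) → ℤ)) ≃+ (Π₀ j : J, (ZMod (m j) → ℤ)))
    (hfx : ∀ g, f (cyclicShift n g) = cyclicShift m (f g))
    (hford : ∀ g, (∀ i k, 0 ≤ g i k) → ∀ j k, 0 ≤ f g j k)
    (hfinv : ∀ h, (∀ j k, 0 ≤ h j k) → ∀ i k, 0 ≤ f.symm h i k) :
    ∃ π : I → J, Function.Bijective π ∧ (∀ i, n i = m (π i)) ∧
      ∀ i, ⇑f '' {g | ∀ i', i' ≠ i → g i' = 0} = {h | ∀ j', j' ≠ π i → h j' = 0} :=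
  stmt_18_general n m hn hm f hfx hford hfinv
end
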